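/- arXiv:2406.02033 — 2 statements merged into one kernel-verified Lean document; each statement's English description precedes it below -/
import Mathlib

section
/- Let n be a positive integer, p ∈ [1, ∞], let A, X_L, X_U be real n×n matrices with ‖X_L·A·X_U − I‖_p < 1, and let b, x̂ be real n-vectors. Then A is nonsingular and ‖A⁻¹·b − x̂‖_p ≤ ‖X_U‖_p·‖X_L·(b − A·x̂)‖_p/(1 − ‖X_L·A·X_U − I‖_p). -/
open Matrix

/-- `ℓ^p` norm of a real vector. -/
noncomputable def lpNorm (p : ENNReal) [Fact (1 ≤ p)] {n : ℕ} (v : Fin n → ℝ) : ℝ :=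
  ‖(WithLp.equiv p (Fin n → ℝ)).symm v‖

/-- Operator norm on real square matrices induced by the `ℓ^p` vector norm. -/
noncomputable def lpOpNorm (p : ENNReal) [Fact (1 ≤ p)] {n : ℕ}
    (M : Matrix (Fin n) (Fin n) ℝ) : ℝ :=
  ‖LinearMap.toContinuousLinearMap
    ((WithLp.linearEquiv p ℝ (Fin n → ℝ)).symm.toLinearMap ∘ₗ M.mulVecLin ∘ₗ
      (WithLp.linearEquiv p ℝ (Fin n → ℝ)).toLinearMap)‖

noncomputable def matCLM (p : ENNReal) [Fact (1 ≤ p)] {n : ℕ}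
    (M : Matrix (Fin n) (Fin n) ℝ) : WithLp p (Fin n → ℝ) →L[ℝ] WithLp p (Fin n → ℝ) :=
  LinearMap.toContinuousLinearMap
    ((WithLp.linearEquiv p ℝ (Fin n → ℝ)).symm.toLinearMap ∘ₗ M.mulVecLin ∘ₗ
      (WithLp.linearEquiv p ℝ (Fin n → ℝ)).toLinearMap)

lemma lpOpNorm_eq (p : ENNReal) [Fact (1 ≤ p)] {n : ℕ} (M : Matrix (Fin n) (Fin n) ℝ) :
    lpOpNorm p M = ‖matCLM p M‖ := rfl

lemma matCLM_apply (p : ENNReal) [Fact (1 ≤ p)] {n : ℕ} (M : Matrix (Fin n) (Fin n) ℝ)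
    (v : WithLp p (Fin n → ℝ)) :
    matCLM p M v = (WithLp.equiv p (Fin n → ℝ)).symm (M.mulVec (WithLp.equiv p (Fin n → ℝ) v)) := rfl

lemma matCLM_mul (p : ENNReal) [Fact (1 ≤ p)] {n : ℕ} (M N : Matrix (Fin n) (Fin n) ℝ) :
    matCLM p (M * N) = (matCLM p M).comp (matCLM p N) := by
  ext v
  simp [matCLM_apply, Matrix.mulVec_mulVec]

lemma matCLM_one (p : ENNReal) [Fact (1 ≤ p)] {n : ℕ} :
    matCLM p (1 : Matrix (Fin n) (Fin n) ℝ) = ContinuousLinearMap.id ℝ _ := by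
  ext v
  simp [matCLM_apply]

lemma matCLM_sub (p : ENNReal) [Fact (1 ≤ p)] {n : ℕ} (M N : Matrix (Fin n) (Fin n) ℝ) :
    matCLM p (M - N) = matCLM p M - matCLM p N := by
  ext v
  simp [matCLM_apply, Matrix.sub_mulVec]

lemma lpNorm_mulVec_le (p : ENNReal) [Fact (1 ≤ p)] {n : ℕ} (N : Matrix (Fin n) (Fin n) ℝ)
    (v : Fin n → ℝ) : lpNorm p (N.mulVec v) ≤ lpOpNorm p N * lpNorm p v := by
  have h := (matCLM p N).le_opNorm ((WithLp.equiv p (Fin n → ℝ)).symm v)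
  simpa [matCLM_apply, lpNorm, lpOpNorm_eq] using h

lemma lpNorm_sub_le (p : ENNReal) [Fact (1 ≤ p)] {n : ℕ} (u w : Fin n → ℝ) :
    lpNorm p (u - w) ≤ lpNorm p u + lpNorm p w := by
  have : (WithLp.equiv p (Fin n → ℝ)).symm (u - w)
      = (WithLp.equiv p (Fin n → ℝ)).symm u - (WithLp.equiv p (Fin n → ℝ)).symm w := rfl
  rw [lpNorm, this]
  exact norm_sub_le _ _

theorem stmt9 {n : ℕ} (hn : 0 < n) (p : ENNReal) [Fact (1 ≤ p)]
    (A XL XU : Matrix (Fin n) (Fin n) ℝ)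
    (h : lpOpNorm p (XL * A * XU - 1) < 1)
    (b xhat : Fin n → ℝ) :
    IsUnit A ∧
      lpNorm p (A⁻¹.mulVec b - xhat) ≤
        lpOpNorm p XU * lpNorm p (XL.mulVec (b - A.mulVec xhat)) /
          (1 - lpOpNorm p (XL * A * XU - 1)) := by
  set M : Matrix (Fin n) (Fin n) ℝ := XL * A * XU with hMdef
  set h0 : ℝ := lpOpNorm p (M - 1) with hh0
  have h0nonneg : 0 ≤ h0 := by rw [hh0, lpOpNorm_eq]; exact norm_nonneg _
  -- matCLM of M is a unit
  have hTnorm : ‖(1 : WithLp p (Fin n → ℝ) →L[ℝ] WithLp p (Fin n → ℝ)) - matCLM p M‖ < 1 := by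
    have heq : matCLM p (M - 1) = matCLM p M - 1 := by
      rw [matCLM_sub, matCLM_one]; rfl
    rw [norm_sub_rev, ← heq, ← lpOpNorm_eq, ← hh0]
    exact h
  have hTunit : IsUnit (matCLM p M) := by
    have := isUnit_one_sub_of_norm_lt_one hTnorm
    simpa using this
  -- transfer to matrix
  have hMunit : IsUnit M := by
    rw [← Matrix.mulVec_injective_iff_isUnit]
    intro v w hvw
    obtain ⟨u, hu⟩ := hTunit
    have hli : ∀ z, ((u⁻¹ : _ˣ) : WithLp p (Fin n → ℝ) →L[ℝ] WithLp p (Fin n → ℝ))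
        (matCLM p M z) = z := by
      intro z
      have h2 : ((↑u⁻¹ * ↑u : WithLp p (Fin n → ℝ) →L[ℝ] WithLp p (Fin n → ℝ))) z = z := by
        rw [u.inv_mul]; rfl
      simpa [ContinuousLinearMap.mul_apply, hu] using h2
    have hinj : Function.Injective (matCLM p M) := by
      intro a c hac
      rw [← hli a, ← hli c, hac]
    have : matCLM p M ((WithLp.equiv p (Fin n → ℝ)).symm v)
        = matCLM p M ((WithLp.equiv p (Fin n → ℝ)).symm w) := by
      simp [matCLM_apply, hvw]
    have := hinj this
    exact (WithLp.equiv p (Fin n → ℝ)).symm.injective this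
  have hMdet : IsUnit M.det := (Matrix.isUnit_iff_isUnit_det M).mp hMunit
  have hdets : IsUnit (XL.det * A.det * XU.det) := by
    rwa [hMdef, Matrix.det_mul, Matrix.det_mul] at hMdet
  have hne : XL.det * A.det * XU.det ≠ 0 := hdets.ne_zero
  have hAdet : IsUnit A.det := by
    refine isUnit_iff_ne_zero.mpr fun hz => hne ?_
    rw [hz]; ring
  have hXUdet : IsUnit XU.det := by
    refine isUnit_iff_ne_zero.mpr fun hz => hne ?_
    rw [hz]; ring
  have hA : IsUnit A := (Matrix.isUnit_iff_isUnit_det A).mpr hAdet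
  refine ⟨hA, ?_⟩
  -- A⁻¹ = XU * M⁻¹ * XL
  have hAinv : A⁻¹ = XU * M⁻¹ * XL := by
    apply Matrix.inv_eq_left_inv
    have hXLA : XL * A = M * XU⁻¹ := by
      rw [hMdef, Matrix.mul_nonsing_inv_cancel_right _ _ hXUdet]
    calc XU * M⁻¹ * XL * A = XU * M⁻¹ * (XL * A) := by rw [mul_assoc]
      _ = XU * M⁻¹ * (M * XU⁻¹) := by rw [hXLA]
      _ = XU * (M⁻¹ * M) * XU⁻¹ := by noncomm_ring
      _ = XU * XU⁻¹ := by rw [Matrix.nonsing_inv_mul _ hMdet, mul_one]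
      _ = 1 := Matrix.mul_nonsing_inv _ hXUdet
  set r : Fin n → ℝ := XL.mulVec (b - A.mulVec xhat) with hr
  set y : Fin n → ℝ := M⁻¹.mulVec r with hy
  have hvec : A⁻¹.mulVec b - xhat = XU.mulVec y := by
    have h1 : A⁻¹.mulVec b - xhat = A⁻¹.mulVec (b - A.mulVec xhat) := by
      rw [Matrix.mulVec_sub, Matrix.mulVec_mulVec, Matrix.nonsing_inv_mul _ hAdet,
        Matrix.one_mulVec]
    rw [h1, hAinv, hy, hr, ← Matrix.mulVec_mulVec, ← Matrix.mulVec_mulVec]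
  -- bound lpNorm y
  have hry : r = M.mulVec y := by
    rw [hy, Matrix.mulVec_mulVec, Matrix.mul_nonsing_inv _ hMdet, Matrix.one_mulVec]
  have hybound : lpNorm p y ≤ lpNorm p r + h0 * lpNorm p y := by
    have hsub : y = r - (M - 1).mulVec y := by
      rw [Matrix.sub_mulVec, Matrix.one_mulVec, hry]
      abel
    calc lpNorm p y = lpNorm p (r - (M - 1).mulVec y) := by rw [← hsub]
      _ ≤ lpNorm p r + lpNorm p ((M - 1).mulVec y) := lpNorm_sub_le _ _ _
      _ ≤ lpNorm p r + h0 * lpNorm p y := by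
          have := lpNorm_mulVec_le p (M - 1) y
          linarith
  have hpos : 0 < 1 - h0 := by linarith
  have hy2 : lpNorm p y ≤ lpNorm p r / (1 - h0) := by
    rw [le_div_iff₀ hpos]
    nlinarith
  have hXUnonneg : 0 ≤ lpOpNorm p XU := by rw [lpOpNorm_eq]; exact norm_nonneg _
  have hynonneg : 0 ≤ lpNorm p y := norm_nonneg _
  calc lpNorm p (A⁻¹.mulVec b - xhat) = lpNorm p (XU.mulVec y) := by rw [hvec]
    _ ≤ lpOpNorm p XU * lpNorm p y := lpNorm_mulVec_le p XU y
    _ ≤ lpOpNorm p XU * (lpNorm p r / (1 - h0)) := by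
        exact mul_le_mul_of_nonneg_left hy2 hXUnonneg
    _ = lpOpNorm p XU * lpNorm p r / (1 - h0) := by ring
end

section
/- Let n be a positive integer, A a real n×n matrix, θ a real number, and ρ ≥ 0 with |θ| > ρ. Let L be an invertible real 2n×2n matrix and D a real symmetric 2n×2n matrix such that exactly n of the eigenvalues of D (counted with multiplicity) are positive, and assume ‖Ā + θ·I − L·D·Lᵀ‖ ≤ ρ. Then for all real n-vectors b and x̂, A is nonsingular and ‖A⁻¹·b − x̂‖ ≤ ‖b − A·x̂‖/(|θ| − ρ). -/
open Matrix

/-- Spectral norm (the operator norm induced by the Euclidean vector norm)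
of a real square matrix. -/
noncomputable def specNorm {m : Type*} [Fintype m] [DecidableEq m]
    (M : Matrix m m ℝ) : ℝ :=
  ‖Matrix.toEuclideanCLM (𝕜 := ℝ) M‖

/-- Euclidean norm of a real vector. -/
noncomputable def eNorm {m : Type*} [Fintype m] (v : m → ℝ) : ℝ :=
  Real.sqrt (∑ i, (v i) ^ 2)

/-- The symmetric block matrix `Ā = [[0, Aᵀ],[A, 0]]`. -/
def abar {n : ℕ} (A : Matrix (Fin n) (Fin n) ℝ) :
    Matrix (Fin n ⊕ Fin n) (Fin n ⊕ Fin n) ℝ :=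
  Matrix.fromBlocks 0 Aᵀ A 0

lemma quad_abs_le {m : Type*} [Fintype m] [DecidableEq m] (M : Matrix m m ℝ) (z : m → ℝ) :
    |z ⬝ᵥ (M *ᵥ z)| ≤ specNorm M * ∑ i, z i ^ 2 := by
  set z' : EuclideanSpace ℝ m := (WithLp.equiv 2 _).symm z with hz'
  have h1 : (inner ℝ z' (Matrix.toEuclideanCLM (𝕜 := ℝ) M z') : ℝ) = z ⬝ᵥ (M *ᵥ z) := by
    rw [hz', WithLp.equiv_symm_apply, Matrix.toEuclideanCLM_toLp]
    simp [PiLp.inner_apply, dotProduct, hz', mul_comm]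
  have h2 : ‖z'‖ ^ 2 = ∑ i, z i ^ 2 := by
    rw [EuclideanSpace.norm_eq, Real.sq_sqrt (by positivity)]
    simp [hz']
  calc |z ⬝ᵥ (M *ᵥ z)| = |(inner ℝ z' (Matrix.toEuclideanCLM (𝕜 := ℝ) M z') : ℝ)| := by rw [h1]
    _ ≤ ‖z'‖ * ‖Matrix.toEuclideanCLM (𝕜 := ℝ) M z'‖ := abs_real_inner_le_norm _ _
    _ ≤ ‖z'‖ * (specNorm M * ‖z'‖) := by
        gcongr; exact (Matrix.toEuclideanCLM (𝕜 := ℝ) M).le_opNorm z'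
    _ = specNorm M * ‖z'‖ ^ 2 := by ring
    _ = specNorm M * ∑ i, z i ^ 2 := by rw [h2]

lemma quad_LDLt {m : Type*} [Fintype m] [DecidableEq m]
    (L D : Matrix m m ℝ) (hD : D.IsHermitian) (z : m → ℝ) :
    z ⬝ᵥ ((L * D * Lᵀ) *ᵥ z) =
      ∑ i, hD.eigenvalues i * (((L * (hD.eigenvectorUnitary : Matrix m m ℝ))ᵀ *ᵥ z) i) ^ 2 := by
  set U : Matrix m m ℝ := (hD.eigenvectorUnitary : Matrix m m ℝ)
  set B : Matrix m m ℝ := L * U with hB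
  have hDspec : D = U * Matrix.diagonal hD.eigenvalues * Uᵀ := by
    have := hD.spectral_theorem
    rwa [Unitary.conjStarAlgAut_apply, Matrix.star_eq_conjTranspose, Matrix.conjTranspose_eq_transpose_of_trivial,
      RCLike.ofReal_real_eq_id, Function.id_comp] at this
  have hfactor : L * D * Lᵀ = B * Matrix.diagonal hD.eigenvalues * Bᵀ := by
    conv_lhs => rw [hDspec]
    rw [hB, Matrix.transpose_mul]
    noncomm_ring
  rw [hfactor, ← Matrix.mulVec_mulVec, ← Matrix.mulVec_mulVec, Matrix.dotProduct_mulVec,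
    ← Matrix.mulVec_transpose]
  simp only [dotProduct, Matrix.mulVec_diagonal]
  exact Finset.sum_congr rfl fun i _ => by ring

set_option maxHeartbeats 1000000 in
lemma key {n : ℕ} (A : Matrix (Fin n) (Fin n) ℝ) (θ ρ : ℝ) (hρ : 0 ≤ ρ) (hθρ : ρ < |θ|)
    (L D : Matrix (Fin n ⊕ Fin n) (Fin n ⊕ Fin n) ℝ) (hD : D.IsHermitian)
    (ε : ℝ) (hε : ε = 1 ∨ ε = -1) (hεθ : ε * θ = |θ|)
    (hT : Fintype.card {i // 0 < ε * hD.eigenvalues i} ≤ n)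
    (hres : specNorm (abar A + θ • (1 : Matrix (Fin n ⊕ Fin n) (Fin n ⊕ Fin n) ℝ)
        - L * D * Lᵀ) ≤ ρ)
    (x₀ : Fin n → ℝ) :
    (|θ| - ρ) ^ 2 * ∑ i, x₀ i ^ 2 ≤ ∑ i, (A *ᵥ x₀) i ^ 2 := by
  by_contra hcon
  push_neg at hcon
  set c : ℝ := |θ| - ρ with hc
  have hc0 : 0 < c := by simp only [hc]; linarith
  set α : ℝ := ∑ i, x₀ i ^ 2 with hα
  set β : ℝ := ∑ i, (A *ᵥ x₀) i ^ 2 with hβ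
  have hβ0 : 0 ≤ β := by positivity
  have hα0 : 0 < α := by nlinarith [sq_nonneg c]
  have hx₀ : x₀ ≠ 0 := by
    intro h
    rw [hα, h] at hα0
    simp at hα0
  have hε1 : |ε| = 1 := by rcases hε with h | h <;> simp [h]
  set M : Matrix (Fin n ⊕ Fin n) (Fin n ⊕ Fin n) ℝ := L * D * Lᵀ with hMdef
  set Ered : Matrix (Fin n ⊕ Fin n) (Fin n ⊕ Fin n) ℝ :=
    abar A + θ • (1 : Matrix (Fin n ⊕ Fin n) (Fin n ⊕ Fin n) ℝ) - M with hE
  have hM : M = abar A + θ • (1 : Matrix (Fin n ⊕ Fin n) (Fin n ⊕ Fin n) ℝ) - Ered :=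
    (sub_sub_cancel _ _).symm
  have hQdecomp : ∀ z : Fin n ⊕ Fin n → ℝ, z ⬝ᵥ (M *ᵥ z) =
      z ⬝ᵥ (abar A *ᵥ z) + θ * (∑ i, z i ^ 2) - z ⬝ᵥ (Ered *ᵥ z) := by
    intro z
    conv_lhs => rw [hM]
    rw [Matrix.sub_mulVec, Matrix.add_mulVec, dotProduct_sub, dotProduct_add]
    congr 1
    congr 1
    rw [Matrix.smul_mulVec, Matrix.one_mulVec, dotProduct_smul, smul_eq_mul]
    congr 1
    simp [dotProduct, sq]
  -- the subspace V
  set U : Matrix (Fin n ⊕ Fin n) (Fin n ⊕ Fin n) ℝ := (hD.eigenvectorUnitary : Matrix (Fin n ⊕ Fin n) (Fin n ⊕ Fin n) ℝ)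
    with hU
  set ψ : ((Fin n ⊕ Fin n) → ℝ) →ₗ[ℝ] ({i // 0 < ε * hD.eigenvalues i} → ℝ) :=
    (LinearMap.funLeft ℝ ℝ Subtype.val).comp ((L * U)ᵀ).mulVecLin with hψ
  set V := LinearMap.ker ψ with hV
  have hVdim : n ≤ Module.finrank ℝ V := by
    rw [hV]
    have h1 := LinearMap.finrank_range_add_finrank_ker ψ
    have h2 : Module.finrank ℝ (LinearMap.range ψ) ≤
        Fintype.card {i // 0 < ε * hD.eigenvalues i} := by
      refine le_trans (Submodule.finrank_le _) ?_
      rw [Module.finrank_pi]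
    have h3 : Module.finrank ℝ ((Fin n ⊕ Fin n) → ℝ) = n + n := by
      rw [Module.finrank_pi, Fintype.card_sum, Fintype.card_fin]
    omega
  have hVneg : ∀ z ∈ V, ε * (z ⬝ᵥ (M *ᵥ z)) ≤ 0 := by
    intro z hz
    rw [hMdef, quad_LDLt L D hD z, Finset.mul_sum]
    apply Finset.sum_nonpos
    intro i _
    by_cases hi : 0 < ε * hD.eigenvalues i
    · have h0 : (z ᵥ* (L * U)) i = 0 := by
        have := LinearMap.mem_ker.mp hz
        have := congrFun this ⟨i, hi⟩
        simpa [hψ, LinearMap.funLeft] using this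
      rw [hU] at h0
      simp only [Matrix.mulVec_transpose]
      rw [h0]
      simp
    · push_neg at hi
      nlinarith [sq_nonneg (((L * (hD.eigenvectorUnitary : Matrix _ _ ℝ))ᵀ *ᵥ z) i)]
  -- the subspace W
  set φ : (ℝ × (Fin n → ℝ)) →ₗ[ℝ] ((Fin n ⊕ Fin n) → ℝ) :=
    { toFun := fun p => Sum.elim (p.1 • x₀) p.2
      map_add' := by
        intro p q
        funext i
        cases i <;> simp [add_smul, add_mul]
      map_smul' := by
        intro a p
        funext i
        cases i <;> simp [mul_assoc] } with hφ
  have hφinj : Function.Injective φ := by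
    rw [← LinearMap.ker_eq_bot, eq_bot_iff]
    rintro ⟨t, y⟩ hp
    have hp' : Sum.elim (t • x₀) y = 0 := hp
    have h1 : t • x₀ = 0 := by funext j; exact congrFun hp' (Sum.inl j)
    have h2 : y = 0 := by funext j; exact congrFun hp' (Sum.inr j)
    rcases smul_eq_zero.mp h1 with h | h
    · simp [Submodule.mem_bot, Prod.ext_iff, h, h2]
    · exact absurd h hx₀
  set W := LinearMap.range φ with hW
  have hWdim : Module.finrank ℝ W = n + 1 := by
    rw [hW, LinearMap.finrank_range_of_inj hφinj, Module.finrank_prod, Module.finrank_self,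
      Module.finrank_pi, Fintype.card_fin]
    omega
  have hWpos : ∀ (t : ℝ) (y : Fin n → ℝ), Sum.elim (t • x₀) y ≠ 0 →
      0 < ε * ((Sum.elim (t • x₀) y) ⬝ᵥ (M *ᵥ (Sum.elim (t • x₀) y))) := by
    intro t y hz0
    set z : (Fin n ⊕ Fin n) → ℝ := Sum.elim (t • x₀) y with hzd
    set Y : ℝ := ∑ i, y i ^ 2 with hYd
    have hY0 : 0 ≤ Y := by positivity
    set g : ℝ := y ⬝ᵥ (A *ᵥ x₀) with hg
    have hzsq : ∑ i, z i ^ 2 = t ^ 2 * α + Y := by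
      rw [Fintype.sum_sum_type]
      simp only [hzd, Sum.elim_inl, Sum.elim_inr, Pi.smul_apply, smul_eq_mul, mul_pow]
      rw [← Finset.mul_sum]
    have habar : z ⬝ᵥ (abar A *ᵥ z) = 2 * t * g := by
      have h1 : (abar A) *ᵥ z = Sum.elim (Aᵀ *ᵥ y) (A *ᵥ (t • x₀)) := by
        rw [hzd]
        show Matrix.fromBlocks 0 Aᵀ A 0 *ᵥ Sum.elim (t • x₀) y = _
        rw [Matrix.fromBlocks_mulVec]
        simp
      rw [h1]
      rw [hzd]
      rw [show (Sum.elim (t • x₀) y) ⬝ᵥ (Sum.elim (Aᵀ *ᵥ y) (A *ᵥ (t • x₀))) =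
        (t • x₀) ⬝ᵥ (Aᵀ *ᵥ y) + y ⬝ᵥ (A *ᵥ (t • x₀)) from Fintype.sum_sum_type _]
      rw [Matrix.mulVec_smul, dotProduct_smul, smul_dotProduct, smul_eq_mul, smul_eq_mul,
        dotProduct_mulVec x₀ Aᵀ y, Matrix.vecMul_transpose, dotProduct_comm, ← hg]
      ring
    have hEb : |z ⬝ᵥ (Ered *ᵥ z)| ≤ ρ * (t ^ 2 * α + Y) := by
      calc |z ⬝ᵥ (Ered *ᵥ z)| ≤ specNorm Ered * ∑ i, z i ^ 2 := quad_abs_le _ _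
        _ ≤ ρ * (t ^ 2 * α + Y) := by
            rw [hzsq]
            have hsum : (0:ℝ) ≤ t ^ 2 * α + Y := by positivity
            exact mul_le_mul_of_nonneg_right hres hsum
    have hCS : g ^ 2 ≤ Y * β := by
      have := Finset.sum_mul_sq_le_sq_mul_sq Finset.univ y (A *ᵥ x₀)
      simpa [hg, hYd, hβ, dotProduct] using this
    have hge : ε * (2 * t * g) + c * (t ^ 2 * α + Y) ≤ ε * (z ⬝ᵥ (M *ᵥ z)) := by
      rw [hQdecomp z, habar, hzsq]
      have h3 : ε * (z ⬝ᵥ (Ered *ᵥ z)) ≤ ρ * (t ^ 2 * α + Y) := by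
        calc ε * (z ⬝ᵥ (Ered *ᵥ z)) ≤ |ε * (z ⬝ᵥ (Ered *ᵥ z))| := le_abs_self _
          _ = |z ⬝ᵥ (Ered *ᵥ z)| := by rw [abs_mul, hε1, one_mul]
          _ ≤ ρ * (t ^ 2 * α + Y) := hEb
      have h4 : ε * (2 * t * g + θ * (t ^ 2 * α + Y) - z ⬝ᵥ (Ered *ᵥ z)) =
          ε * (2 * t * g) + |θ| * (t ^ 2 * α + Y) - ε * (z ⬝ᵥ (Ered *ᵥ z)) := by
        rw [← hεθ]; ring
      rw [h4, hc]
      nlinarith [h3]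
    have hpos : 0 < ε * (2 * t * g) + c * (t ^ 2 * α + Y) := by
      by_cases ht : t = 0
      · subst ht
        have hy0 : y ≠ 0 := by
          intro h
          apply hz0
          rw [hzd, h]
          funext i
          cases i <;> simp
        obtain ⟨j, hj⟩ := Function.ne_iff.mp hy0
        have hj' : y j ≠ 0 := hj
        have hYpos : 0 < Y := by
          have h1 : y j ^ 2 ≤ Y := Finset.single_le_sum (f := fun i => y i ^ 2)
            (fun i _ => sq_nonneg _) (Finset.mem_univ j)
          have h2 : 0 < y j ^ 2 := by positivity
          linarith
        nlinarith
      · have ht2 : 0 < t ^ 2 := by positivity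
        by_cases hYz : Y = 0
        · have hg0 : g = 0 := by nlinarith
          rw [hg0, hYz]
          nlinarith
        · have hYpos : 0 < Y := lt_of_le_of_ne hY0 (Ne.symm hYz)
          have hstep1 : (2 * |t| * |g|) ^ 2 ≤ 4 * t ^ 2 * (Y * β) := by
            have h6 : (2 * |t| * |g|) ^ 2 = 4 * t ^ 2 * g ^ 2 := by
              rw [mul_pow, mul_pow, sq_abs, sq_abs]; ring
            have h7 : 4 * t ^ 2 * g ^ 2 ≤ 4 * t ^ 2 * (Y * β) :=
              mul_le_mul_of_nonneg_left hCS (by positivity)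
            linarith
          have hstep2 : 4 * t ^ 2 * (Y * β) < (c * (t ^ 2 * α + Y)) ^ 2 := by
            have h6 : 4 * t ^ 2 * (Y * β) = 4 * (t ^ 2 * Y) * β := by ring
            have h7 : 4 * (t ^ 2 * Y) * β < 4 * (t ^ 2 * Y) * (c ^ 2 * α) :=
              mul_lt_mul_of_pos_left hcon (by positivity)
            have h8 : (c * (t ^ 2 * α + Y)) ^ 2 - 4 * (t ^ 2 * Y) * (c ^ 2 * α)
                = (c * (t ^ 2 * α - Y)) ^ 2 := by ring
            have h9 := sq_nonneg (c * (t ^ 2 * α - Y))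
            linarith
          have hlt : 2 * |t| * |g| < c * (t ^ 2 * α + Y) :=
            lt_of_pow_lt_pow_left₀ 2 (by positivity) (lt_of_le_of_lt hstep1 hstep2)
          have habs : |ε * (2 * t * g)| = 2 * |t| * |g| := by
            rw [abs_mul, hε1, one_mul, abs_mul, abs_mul, abs_two]
          have h5 : -(2 * |t| * |g|) ≤ ε * (2 * t * g) := by
            rw [← habs]; exact neg_abs_le _
          linarith
    linarith
  -- combine
  have hWV : W ⊓ V = ⊥ := by
    rw [eq_bot_iff]
    rintro z hz
    rw [Submodule.mem_bot]
    by_contra hz0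
    obtain ⟨⟨t, y⟩, hty⟩ := (Submodule.mem_inf.mp hz).1
    have hty' : Sum.elim (t • x₀) y = z := hty
    have h1 := hWpos t y (by rw [hty']; exact hz0)
    rw [hty'] at h1
    have h2 := hVneg z (Submodule.mem_inf.mp hz).2
    linarith
  have hsum := Submodule.finrank_sup_add_finrank_inf_eq W V
  rw [hWV, finrank_bot] at hsum
  have hle : Module.finrank ℝ ↥(W ⊔ V) ≤ Module.finrank ℝ ((Fin n ⊕ Fin n) → ℝ) :=
    Submodule.finrank_le _
  have h3 : Module.finrank ℝ ((Fin n ⊕ Fin n) → ℝ) = n + n := by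
    rw [Module.finrank_pi, Fintype.card_sum, Fintype.card_fin]
  omega

theorem stmt18 {n : ℕ} (hn : 0 < n) (A : Matrix (Fin n) (Fin n) ℝ)
    (θ ρ : ℝ) (hρ : 0 ≤ ρ) (hθρ : ρ < |θ|)
    (L D : Matrix (Fin n ⊕ Fin n) (Fin n ⊕ Fin n) ℝ)
    (hL : IsUnit L) (hD : D.IsHermitian)
    (hcount : Fintype.card {i // 0 < hD.eigenvalues i} = n)
    (hres : specNorm (abar A + θ • (1 : Matrix (Fin n ⊕ Fin n) (Fin n ⊕ Fin n) ℝ)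
        - L * D * Lᵀ) ≤ ρ) :
    ∀ b xhat : Fin n → ℝ,
      IsUnit A ∧
        eNorm (A⁻¹.mulVec b - xhat) ≤ eNorm (b - A.mulVec xhat) / (|θ| - ρ) := by
  intro b xhat
  set c : ℝ := |θ| - ρ with hcdef
  have hc0 : 0 < c := by simp only [hcdef]; linarith
  have hθ0 : θ ≠ 0 := by
    intro h
    rw [h, abs_zero] at hθρ
    linarith
  obtain ⟨ε, hε, hεθ, hT⟩ : ∃ ε : ℝ, (ε = 1 ∨ ε = -1) ∧ ε * θ = |θ| ∧
      Fintype.card {i // 0 < ε * hD.eigenvalues i} ≤ n := by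
    rcases lt_or_gt_of_ne hθ0 with hneg | hpos
    · refine ⟨-1, Or.inr rfl, by rw [abs_of_neg hneg]; ring, ?_⟩
      classical
      have hdisj : Disjoint (Finset.univ.filter fun i => 0 < -1 * hD.eigenvalues i)
          (Finset.univ.filter fun i => 0 < hD.eigenvalues i) := by
        rw [Finset.disjoint_left]
        intro i hi1 hi2
        simp only [Finset.mem_filter] at hi1 hi2
        linarith [hi1.2, hi2.2]
      have h1 : Fintype.card {i // 0 < -1 * hD.eigenvalues i} +
          Fintype.card {i // 0 < hD.eigenvalues i} ≤ Fintype.card (Fin n ⊕ Fin n) := by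
        rw [Fintype.card_subtype, Fintype.card_subtype, ← Finset.card_union_of_disjoint hdisj]
        exact Finset.card_le_univ _
      have h2 : Fintype.card (Fin n ⊕ Fin n) = n + n := by simp
      omega
    · refine ⟨1, Or.inl rfl, by rw [abs_of_pos hpos]; ring, ?_⟩
      have : Fintype.card {i // 0 < 1 * hD.eigenvalues i} =
          Fintype.card {i // 0 < hD.eigenvalues i} :=
        Fintype.card_congr (Equiv.subtypeEquivRight fun i => by rw [one_mul])
      omega
  have hkey := key A θ ρ hρ hθρ L D hD ε hε hεθ hT hres
  have hinj : Function.Injective A.mulVec := by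
    intro u v huv
    have hA0 : A *ᵥ (u - v) = 0 := by rw [Matrix.mulVec_sub, huv, sub_self]
    have h2 := hkey (u - v)
    rw [hA0, ← hcdef] at h2
    simp only [Pi.zero_apply, ne_eq, OfNat.ofNat_ne_zero, not_false_eq_true, zero_pow,
      Finset.sum_const_zero] at h2
    have hs0 : ∑ i, (u - v) i ^ 2 = 0 := by
      have hnn : (0:ℝ) ≤ ∑ i, (u - v) i ^ 2 := by positivity
      by_contra hne
      have hpos : 0 < ∑ i, (u - v) i ^ 2 := lt_of_le_of_ne hnn (Ne.symm hne)
      have := mul_pos (pow_pos hc0 2) hpos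
      linarith
    have hz : ∀ i ∈ Finset.univ, (u - v) i ^ 2 = 0 :=
      (Finset.sum_eq_zero_iff_of_nonneg (fun i _ => sq_nonneg _)).mp hs0
    have : u - v = 0 := by
      funext i
      have := hz i (Finset.mem_univ i)
      exact pow_eq_zero_iff (by norm_num) |>.mp this
    exact sub_eq_zero.mp this
  have hAunit : IsUnit A := Matrix.mulVec_injective_iff_isUnit.mp hinj
  refine ⟨hAunit, ?_⟩
  set d : Fin n → ℝ := A⁻¹.mulVec b - xhat with hd
  have hAd : A *ᵥ d = b - A *ᵥ xhat := by
    rw [hd, Matrix.mulVec_sub, Matrix.mulVec_mulVec,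
      Matrix.mul_nonsing_inv _ ((Matrix.isUnit_iff_isUnit_det A).mp hAunit),
      Matrix.one_mulVec]
  have h2 := hkey d
  rw [hAd, ← hcdef] at h2
  have h4 : ∑ i, d i ^ 2 ≤ (∑ i, (b - A *ᵥ xhat) i ^ 2) / c ^ 2 := by
    rw [le_div_iff₀ (by positivity)]
    linarith
  calc eNorm d = Real.sqrt (∑ i, d i ^ 2) := rfl
    _ ≤ Real.sqrt ((∑ i, (b - A *ᵥ xhat) i ^ 2) / c ^ 2) := Real.sqrt_le_sqrt h4
    _ = Real.sqrt (∑ i, (b - A *ᵥ xhat) i ^ 2) / Real.sqrt (c ^ 2) :=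
        Real.sqrt_div (by positivity) _
    _ = eNorm (b - A.mulVec xhat) / c := by rw [Real.sqrt_sq hc0.le]; rfl
end
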